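/- arXiv:2505.18481 — 2 statements merged into one kernel-verified Lean document; each statement's English description precedes it below -/
import Mathlib

section
/- Let G : ℝ → ℝ be continuous, strictly increasing, with limits G(±∞) = ±C for some C > 0, and let ρ(m,K,·) be the Gaussian density with mean m and variance K > 0. If 0 < A < C, then there exists a unique m ∈ ℝ such that ∫_ℝ G(y) ρ(m,K,y) dy = A. -/
/-- Gaussian density with mean `m` and variance `K` at `y`. -/
noncomputable def gaussρ (m K y : ℝ) : ℝ :=
  (2 * Real.pi * K) ^ (-(1:ℝ)/2) * Real.exp (-((y - m) ^ 2) / (2 * K))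

/-!
The substitution `y = z + m` turns the integral into `F m = ∫ G (z + m) dN(0, K)(z)`. As `G` is
bounded by `C`, dominated convergence makes `F` continuous with `F (±∞) = ±C`, and `F` inherits
strict monotonicity from `G` because the Gaussian measure is nonzero. The intermediate value
theorem then gives exactly one `m` with `F m = A`.
-/

open MeasureTheory ProbabilityTheory Filter Topology Set

lemma StrictMono.existsUnique_eq_of_tendsto {α β : Type*} [LinearOrder α] [TopologicalSpace α]
    [PreconnectedSpace α] [Nonempty α] [LinearOrder β] [TopologicalSpace β] [OrderTopology β]
    {F : α → β} {a b c : β} (hF : StrictMono F) (hFc : Continuous F)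
    (hbot : Tendsto F atBot (𝓝 a)) (htop : Tendsto F atTop (𝓝 b)) (hac : a < c) (hcb : c < b) :
    ∃! x, F x = c := by
  obtain ⟨x, hx⟩ := mem_range_of_exists_le_of_exists_ge hFc
    ((hbot.eventually (eventually_lt_nhds hac)).exists.imp fun _ => le_of_lt)
    ((htop.eventually (eventually_gt_nhds hcb)).exists.imp fun _ => le_of_lt)
  exact ⟨x, hx, fun y hy => hF.injective (hy.trans hx.symm)⟩

lemma Monotone.abs_le_of_tendsto {α : Type*} [Preorder α] [IsDirectedOrder α]
    [IsCodirectedOrder α] {G : α → ℝ} {C : ℝ} (hG : Monotone G)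
    (hbot : Tendsto G atBot (𝓝 (-C))) (htop : Tendsto G atTop (𝓝 C)) (y : α) : |G y| ≤ C :=
  abs_le.2 ⟨hG.le_of_tendsto hbot y, hG.ge_of_tendsto htop y⟩

section ShiftedIntegral

variable {μ : Measure ℝ} {G : ℝ → ℝ} {C : ℝ}

lemma integrable_comp_add_right_of_abs_le [IsFiniteMeasure μ] (hG : Measurable G)
    (hGC : ∀ y, |G y| ≤ C) (m : ℝ) : Integrable (fun z => G (z + m)) μ :=
  .of_bound (hG.comp (measurable_add_const m)).aestronglyMeasurable C
    (ae_of_all _ fun _ => hGC _)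

lemma continuous_integral_comp_add_right [IsFiniteMeasure μ] (hG : Continuous G)
    (hGC : ∀ y, |G y| ≤ C) : Continuous fun m => ∫ z, G (z + m) ∂μ :=
  continuous_of_dominated (fun m => (hG.comp (continuous_add_const m)).aestronglyMeasurable)
    (fun _ => ae_of_all _ fun _ => hGC _) (integrable_const C)
    (ae_of_all _ fun z => hG.comp (continuous_const_add z))

lemma strictMono_integral_comp_add_right [IsFiniteMeasure μ] [NeZero μ] (hG : StrictMono G)
    (hGC : ∀ y, |G y| ≤ C) : StrictMono fun m => ∫ z, G (z + m) ∂μ := by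
  intro m₁ m₂ hm
  have hint := integrable_comp_add_right_of_abs_le (μ := μ) hG.monotone.measurable hGC
  have hgap : ∀ z, 0 < G (z + m₂) - G (z + m₁) := fun z => sub_pos.2 (hG (by linarith))
  have hsupp : Function.support (fun z => G (z + m₂) - G (z + m₁)) = univ :=
    eq_univ_of_forall fun z => (hgap z).ne'
  have hpos : 0 < ∫ z, (G (z + m₂) - G (z + m₁)) ∂μ := by
    rw [integral_pos_iff_support_of_nonneg (fun z => (hgap z).le) ((hint m₂).sub (hint m₁)),
      hsupp]
    exact Measure.measure_univ_pos.2 (NeZero.ne μ)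
  rw [integral_sub (hint m₂) (hint m₁)] at hpos
  exact sub_pos.1 hpos

lemma tendsto_integral_comp_add_right [IsProbabilityMeasure μ] {l : Filter ℝ}
    [l.IsCountablyGenerated] (hl : ∀ z, Tendsto (z + ·) l l) (hG : Measurable G)
    (hGC : ∀ y, |G y| ≤ C) {a : ℝ} (hGa : Tendsto G l (𝓝 a)) :
    Tendsto (fun m => ∫ z, G (z + m) ∂μ) l (𝓝 a) := by
  have h := tendsto_integral_filter_of_dominated_convergence (μ := μ) (fun _ => C)
    (.of_forall fun m => (hG.comp (measurable_add_const m)).aestronglyMeasurable)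
    (.of_forall fun _ => ae_of_all _ fun _ => hGC _) (integrable_const C)
    (ae_of_all _ fun z => hGa.comp (hl z))
  simpa using h

end ShiftedIntegral

lemma gaussρ_eq_gaussianPDFReal {K : ℝ} (hK : 0 ≤ K) (m : ℝ) :
    gaussρ m K = gaussianPDFReal m K.toNNReal := by
  ext y
  rw [gaussρ, gaussianPDFReal_def, Real.coe_toNNReal K hK, Real.sqrt_eq_rpow,
    ← Real.rpow_neg (by positivity)]
  ring_nf

lemma integral_mul_gaussρ {K : ℝ} (hK : 0 < K) (G : ℝ → ℝ) (m : ℝ) :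
    ∫ y, G y * gaussρ m K y = ∫ z, G (z + m) ∂gaussianReal 0 K.toNNReal := by
  rw [← (measurableEmbedding_addRight m).integral_map, gaussianReal_map_add_const, zero_add,
    integral_gaussianReal_eq_integral_smul (by simpa using hK),
    gaussρ_eq_gaussianPDFReal hK.le]
  simp_rw [smul_eq_mul, mul_comm]

theorem stmt8_general (G : ℝ → ℝ) (C A K : ℝ) (hK : 0 < K)
    (hGc : Continuous G) (hGm : StrictMono G)
    (htop : Filter.Tendsto G Filter.atTop (nhds C))
    (hbot : Filter.Tendsto G Filter.atBot (nhds (-C)))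
    (hA0 : 0 < A) (hAC : A < C) :
    ∃! m : ℝ, (∫ y : ℝ, G y * gaussρ m K y) = A := by
  have hGC := hGm.monotone.abs_le_of_tendsto hbot htop
  simp_rw [integral_mul_gaussρ hK]
  exact (strictMono_integral_comp_add_right hGm hGC).existsUnique_eq_of_tendsto
    (continuous_integral_comp_add_right hGc hGC)
    (tendsto_integral_comp_add_right (fun z => tendsto_atBot_add_const_left _ z tendsto_id)
      hGc.measurable hGC hbot)
    (tendsto_integral_comp_add_right (fun z => tendsto_atTop_add_const_left _ z tendsto_id)
      hGc.measurable hGC htop)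
    (by linarith) hAC

theorem stmt8 (G : ℝ → ℝ) (C A K : ℝ) (hC : 0 < C) (hK : 0 < K)
    (hGc : Continuous G) (hGm : StrictMono G)
    (htop : Filter.Tendsto G Filter.atTop (nhds C))
    (hbot : Filter.Tendsto G Filter.atBot (nhds (-C)))
    (hA0 : 0 < A) (hAC : A < C) :
    ∃! m : ℝ, (∫ y : ℝ, G y * gaussρ m K y) = A :=
  stmt8_general G C A K hK hGc hGm htop hbot hA0 hAC
end

section
/- Let G : ℝ → ℝ be bounded, measurable, and strictly increasing, and ρ(m,K,y) the Gaussian density with mean m and variance K > 0. Then the function m ↦ ∫_ℝ G(y) ρ(m,K,y) dy is strictly increasing and differentiable, with derivative ∫_ℝ G(y)·((y−m)/K)·ρ(m,K,y) dy > 0. -/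
/-!
Differentiation under the integral sign is justified by dominating `|y - m| ρ(m,K,y)`, uniformly
for `|m - m₀| < 1`, by `(|y - m₀| + 1)` times a wider Gaussian centred at `m₀`. Since
`(y - m) ρ(m,K,y)` has mean zero, the derivative equals `∫ (G y - G m) (y - m) / K ρ(m,K,y) dy`,
whose integrand is positive for `y ≠ m` because `G` is strictly increasing. A positive derivative
then gives strict monotonicity.
-/

open MeasureTheory Real Set Filter

theorem StrictMono.sub_mul_sub_pos {α : Type*} [Ring α] [LinearOrder α] [IsStrictOrderedRing α]
    {f : α → α} (hf : StrictMono f) {x y : α} (hxy : x ≠ y) : 0 < (f x - f y) * (x - y) := by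
  rcases hxy.lt_or_gt with h | h
  · exact mul_pos_of_neg_of_neg (sub_neg.2 (hf h)) (sub_neg.2 h)
  · exact mul_pos (sub_pos.2 (hf h)) (sub_pos.2 h)

theorem exp_neg_mul_sq_le_of_abs_sub_le {b t s : ℝ} (hb : 0 ≤ b) (hts : |t - s| ≤ 1) :
    exp (-b * t ^ 2) ≤ exp b * exp (-(b / 2) * s ^ 2) := by
  rw [← exp_add, exp_le_exp]
  have hsq : (t - s) ^ 2 ≤ 1 := by nlinarith [sq_abs (t - s), abs_nonneg (t - s)]
  nlinarith [sq_nonneg (t + (t - s))]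

theorem integrable_abs_add_one_mul_exp_neg_mul_sq {b : ℝ} (hb : 0 < b) :
    Integrable fun x : ℝ => (|x| + 1) * exp (-b * x ^ 2) := by
  refine ((integrable_mul_exp_neg_mul_sq hb).norm.add (integrable_exp_neg_mul_sq hb)).congr
    (ae_of_all _ fun x => ?_)
  simp only [Pi.add_apply, norm_mul, Real.norm_eq_abs, abs_of_pos (exp_pos _)]
  ring

section

variable {K : ℝ}

theorem gaussρ_eq (m K y : ℝ) :
    gaussρ m K y = (2 * π * K) ^ (-(1:ℝ)/2) * exp (-(2 * K)⁻¹ * (y - m) ^ 2) := by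
  rw [gaussρ]; ring_nf

theorem gaussρ_pos (hK : 0 < K) (m y : ℝ) : 0 < gaussρ m K y := by
  have : 0 < 2 * π * K := by positivity
  rw [gaussρ]; positivity

theorem gaussρ_sub (m K y : ℝ) : gaussρ m K y = gaussρ 0 K (y - m) := by
  simp [gaussρ]

theorem hasDerivAt_gaussρ (K y m : ℝ) :
    HasDerivAt (fun m' => gaussρ m' K y) ((y - m) / K * gaussρ m K y) m := by
  have hsub : HasDerivAt (fun m' : ℝ => y - m') (-1) m := by
    simpa using (hasDerivAt_id m).const_sub y
  have hexponent : HasDerivAt (fun m' => -((y - m') ^ 2) / (2 * K)) ((y - m) / K) m :=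
    ((hsub.pow 2).neg.div_const (2 * K)).congr_deriv (by ring)
  refine (hexponent.exp.const_mul ((2 * π * K) ^ (-(1:ℝ)/2))).congr_deriv ?_
  unfold gaussρ; ring

theorem integrable_gaussρ (hK : 0 < K) (m : ℝ) : Integrable (gaussρ m K ·) := by
  simp_rw [gaussρ_eq]
  exact ((integrable_exp_neg_mul_sq (by positivity)).const_mul _).comp_sub_right m

theorem integrable_sub_div_mul_gaussρ (hK : 0 < K) (m : ℝ) :
    Integrable fun y => (y - m) / K * gaussρ m K y := by
  have := ((integrable_mul_exp_neg_mul_sq (b := (2 * K)⁻¹) (by positivity)).const_mul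
    ((2 * π * K) ^ (-(1:ℝ)/2) / K)).comp_sub_right m
  refine this.congr (ae_of_all _ fun y => ?_)
  simp only [gaussρ_eq]; ring

theorem integral_sub_div_mul_gaussρ (K m : ℝ) :
    ∫ y, (y - m) / K * gaussρ m K y = 0 := by
  set f : ℝ → ℝ := fun z => z / K * gaussρ 0 K z
  have hodd : (fun z => f (-z)) = fun z => -f z := by
    ext z; simp only [f, gaussρ]; ring_nf
  have hneg := integral_neg_eq_self f volume
  rw [hodd, integral_neg] at hneg
  simp_rw [gaussρ_sub m K]
  rw [integral_sub_right_eq_self f m]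
  linarith

theorem abs_sub_div_mul_gaussρ_le (hK : 0 < K) {m m₀ : ℝ} (hm : |m - m₀| ≤ 1) (y : ℝ) :
    |(y - m) / K * gaussρ m K y| ≤ (2 * π * K) ^ (-(1:ℝ)/2) / K * exp (2 * K)⁻¹ *
      ((|y - m₀| + 1) * exp (-((2 * K)⁻¹ / 2) * (y - m₀) ^ 2)) := by
  have hc : 0 < (2 * π * K) ^ (-(1:ℝ)/2) := by
    have : 0 < 2 * π * K := by positivity
    positivity
  have habs : |y - m| ≤ |y - m₀| + 1 := by
    linarith [abs_sub_le y m₀ m, abs_sub_comm m₀ m]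
  have hexp := exp_neg_mul_sq_le_of_abs_sub_le (b := (2 * K)⁻¹) (t := y - m) (s := y - m₀)
    (by positivity) (by rwa [sub_sub_sub_cancel_left, abs_sub_comm])
  calc |(y - m) / K * gaussρ m K y|
      = (2 * π * K) ^ (-(1:ℝ)/2) / K * (|y - m| * exp (-(2 * K)⁻¹ * (y - m) ^ 2)) := by
        rw [gaussρ_eq, abs_mul, abs_div, abs_of_pos hK, abs_mul, abs_of_pos hc,
          abs_of_pos (exp_pos _)]
        ring
    _ ≤ (2 * π * K) ^ (-(1:ℝ)/2) / K *
          ((|y - m₀| + 1) * (exp (2 * K)⁻¹ * exp (-((2 * K)⁻¹ / 2) * (y - m₀) ^ 2))) := by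
        gcongr
    _ = _ := by ring

theorem hasDerivAt_integral_mul_gaussρ (hK : 0 < K) {G : ℝ → ℝ} {B : ℝ}
    (hG : AEStronglyMeasurable G) (hB : ∀ z, |G z| ≤ B) (m₀ : ℝ) :
    HasDerivAt (fun m => ∫ y, G y * gaussρ m K y)
      (∫ y, G y * ((y - m₀) / K) * gaussρ m₀ K y) m₀ := by
  have hGρ : ∀ m, Integrable fun y => G y * gaussρ m K y := fun m =>
    (integrable_gaussρ hK m).bdd_mul hG (ae_of_all _ hB)
  have hGρ' : Integrable fun y => G y * ((y - m₀) / K * gaussρ m₀ K y) :=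
    (integrable_sub_div_mul_gaussρ hK m₀).bdd_mul hG (ae_of_all _ hB)
  refine (hasDerivAt_integral_of_dominated_loc_of_deriv_le
    (F' := fun m y => G y * ((y - m) / K) * gaussρ m K y)
    (bound := fun y => B * ((2 * π * K) ^ (-(1:ℝ)/2) / K * exp (2 * K)⁻¹ *
      ((|y - m₀| + 1) * exp (-((2 * K)⁻¹ / 2) * (y - m₀) ^ 2))))
    (Metric.ball_mem_nhds m₀ one_pos)
    (Eventually.of_forall fun m => (hGρ m).aestronglyMeasurable) (hGρ m₀)
    (by simpa only [mul_assoc] using hGρ'.aestronglyMeasurable)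
    (ae_of_all _ fun y m hm => ?_) ?_ (ae_of_all _ fun y m _ => ?_)).2
  · rw [mul_assoc, norm_mul, Real.norm_eq_abs, Real.norm_eq_abs]
    exact mul_le_mul (hB y) (abs_sub_div_mul_gaussρ_le hK (le_of_lt hm) y) (abs_nonneg _)
      ((abs_nonneg _).trans (hB y))
  · exact (((integrable_abs_add_one_mul_exp_neg_mul_sq (by positivity)).comp_sub_right
      m₀).const_mul _).const_mul _
  · simpa only [mul_assoc] using (hasDerivAt_gaussρ K y m).const_mul (G y)

theorem integral_mul_sub_div_mul_gaussρ_pos (hK : 0 < K) {G : ℝ → ℝ} {B : ℝ}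
    (hG : StrictMono G) (hB : ∀ z, |G z| ≤ B) (m : ℝ) :
    0 < ∫ y, G y * ((y - m) / K) * gaussρ m K y := by
  set f : ℝ → ℝ := fun y => (y - m) / K * gaussρ m K y
  have hf : Integrable f := integrable_sub_div_mul_gaussρ hK m
  have hGf : Integrable fun y => G y * f y :=
    hf.bdd_mul hG.monotone.measurable.aestronglyMeasurable (ae_of_all _ hB)
  have hcentre : ∫ y, G y * ((y - m) / K) * gaussρ m K y = ∫ y, (G y - G m) * f y := by
    simp_rw [sub_mul, integral_sub hGf (hf.const_mul _), integral_const_mul, f,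
      integral_sub_div_mul_gaussρ, mul_zero, sub_zero, mul_assoc]
  have hpos : ∀ y, y ≠ m → 0 < (G y - G m) * f y := fun y hy => by
    have := hG.sub_mul_sub_pos hy
    have := gaussρ_pos hK m y
    calc 0 < (G y - G m) * (y - m) * (gaussρ m K y / K) := by positivity
      _ = (G y - G m) * f y := by simp only [f]; ring
  have hnonneg : 0 ≤ fun y => (G y - G m) * f y := fun y => by
    rcases eq_or_ne y m with rfl | hy
    · simp
    · exact (hpos y hy).le
  have hint : Integrable fun y => (G y - G m) * f y :=
    (hGf.sub (hf.const_mul (G m))).congr (ae_of_all _ fun y => by simp only [Pi.sub_apply]; ring)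
  rw [hcentre, integral_pos_iff_support_of_nonneg hnonneg hint]
  exact (Real.volume_Ioi ▸ ENNReal.zero_lt_top).trans_le
    (measure_mono fun y hy => (hpos y (ne_of_gt hy)).ne')

end

theorem stmt9_general (G : ℝ → ℝ) (K : ℝ) (hK : 0 < K)
    (hGbdd : ∃ B, ∀ z, |G z| ≤ B) (hGm : StrictMono G) :
    StrictMono (fun m => ∫ y : ℝ, G y * gaussρ m K y) ∧
    ∀ m : ℝ,
      HasDerivAt (fun m' => ∫ y : ℝ, G y * gaussρ m' K y)
        (∫ y : ℝ, G y * ((y - m) / K) * gaussρ m K y) m ∧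
      0 < ∫ y : ℝ, G y * ((y - m) / K) * gaussρ m K y := by
  obtain ⟨B, hB⟩ := hGbdd
  have hderiv := hasDerivAt_integral_mul_gaussρ hK hGm.monotone.measurable.aestronglyMeasurable hB
  have hpos := integral_mul_sub_div_mul_gaussρ_pos hK hGm hB
  exact ⟨strictMono_of_hasDerivAt_pos hderiv hpos, fun m => ⟨hderiv m, hpos m⟩⟩

theorem stmt9 (G : ℝ → ℝ) (K : ℝ) (hK : 0 < K)
    (hGmeas : Measurable G) (hGbdd : ∃ B, ∀ z, |G z| ≤ B) (hGm : StrictMono G) :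
    StrictMono (fun m => ∫ y : ℝ, G y * gaussρ m K y) ∧
    ∀ m : ℝ,
      HasDerivAt (fun m' => ∫ y : ℝ, G y * gaussρ m' K y)
        (∫ y : ℝ, G y * ((y - m) / K) * gaussρ m K y) m ∧
      0 < ∫ y : ℝ, G y * ((y - m) / K) * gaussρ m K y :=
  stmt9_general G K hK hGbdd hGm
end
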